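/- arXiv:1806.08962 — 3 statements merged into one kernel-verified Lean document; each statement's English description precedes it below -/
import Mathlib

section
/- Assume c₂ = −1. Let α ∈ U be τ-rational with c := B_τ(α, α) invertible in k. Then the composite k-linear operator r_{𝒯α} ∘ r_α : U → U commutes with the τ-operator 𝒯, i.e. 𝒯 ∘ (r_{𝒯α} ∘ r_α) = (r_{𝒯α} ∘ r_α) ∘ 𝒯. -/
open scoped BigOperators

section Common

variable {k : Type*} [CommRing k] {l : Type*} [CommRing l] [Algebra k l]

/-- the standard `l`-bilinear dot product on `𝒰 = lⁿ`. -/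
def dotU {n : ℕ} (u v : Fin n → l) : l := ∑ i, u i * v i

/-- the `τ`-form `B_τ` on `U`. -/
noncomputable def tauForm (b : Module.Basis (Fin 2) k l) {n : ℕ} (u v : Fin n → l) : k :=
  b.repr (dotU u v) 0

/-- the `k`-linear reflection `r_α(u) = u − 2c⁻¹·B_τ(u, α)·α` of `U`, where `cinv` is the
inverse of `c = B_τ(α, α)`. -/
noncomputable def reflU (b : Module.Basis (Fin 2) k l) {n : ℕ} (cinv : k) (α u : Fin n → l) : Fin n → l :=
  u - (2 * cinv * tauForm b u α) • α

end Common

/-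
With `c₂ = −1` we have `τ² = c₁τ + 1`, and on coordinates `x = x₀ + x₁τ` multiplication by `τ`
gives `pr_τ(τx) = x₁`.  For `τ`-rational `α` this makes `α` and `𝒯α` orthogonal, since
`B_τ(α, 𝒯α) = pr_τ(τ·(α·α))` is the `τ`-coordinate of an element of `k`.  Hence
`r_{𝒯α} ∘ r_α (u) = u − 2c⁻¹(B_τ(u, α)·α + B_τ(u, 𝒯α)·𝒯α)`, and both sides of the claim become
explicit combinations of `𝒯u`, `α`, `𝒯α` and `𝒯²α`, which agree after `τ² = c₁τ + 1`.
-/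

open Matrix

section Forms

variable {k : Type*} [CommRing k] {l : Type*} [CommRing l] [Algebra k l]
  (b : Module.Basis (Fin 2) k l) {n : ℕ}

theorem dotU_eq_dotProduct (u v : Fin n → l) : dotU u v = u ⬝ᵥ v := rfl

theorem dotU_smul_right (x : l) (u v : Fin n → l) : dotU u (x • v) = x * dotU u v := by
  simp [dotU_eq_dotProduct, dotProduct_smul]

theorem tauForm_sub_smul_left (a : k) (u w v : Fin n → l) :
    tauForm b (u - a • w) v = tauForm b u v - a * tauForm b w v := by
  simp [tauForm, dotU_eq_dotProduct, sub_dotProduct, smul_dotProduct]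

theorem tauForm_smul_left (x : l) (u v : Fin n → l) :
    tauForm b (x • u) v = b.repr (x * dotU u v) 0 := by
  simp [tauForm, dotU_eq_dotProduct, smul_dotProduct]

theorem tauForm_smul_right (x : l) (u v : Fin n → l) :
    tauForm b u (x • v) = b.repr (x * dotU u v) 0 := by
  rw [tauForm, dotU_smul_right]

theorem reflU_reflU_of_tauForm_eq_zero (cinv : k) {α β : Fin n → l} (hαβ : tauForm b α β = 0)
    (u : Fin n → l) :
    reflU b cinv β (reflU b cinv α u) =
      u - (2 * cinv * tauForm b u α) • α - (2 * cinv * tauForm b u β) • β := by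
  rw [reflU, reflU, tauForm_sub_smul_left, hαβ, mul_zero, sub_zero]

end Forms

section QuadraticAlgebra

variable {k : Type*} [CommRing k] {l : Type*} [CommRing l] [Algebra k l]
  {b : Module.Basis (Fin 2) k l} {τ : l} {c₁ c₂ : k}

theorem repr_algebraMap_one (hb0 : b 0 = 1) (a : k) : b.repr (algebraMap k l a) 1 = 0 := by
  simp [Algebra.algebraMap_eq_smul_one, ← hb0]

theorem tau_mul_eq_basis_combination (hb0 : b 0 = 1) (hb1 : b 1 = τ)
    (hτ : τ ^ 2 = algebraMap k l c₁ * τ - algebraMap k l c₂) (x : l) :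
    τ * x = (-(c₂ * b.repr x 1)) • b 0 + (b.repr x 0 + c₁ * b.repr x 1) • b 1 := by
  conv_lhs => rw [← b.sum_repr x]
  simp only [Fin.sum_univ_two, hb0, hb1, Algebra.smul_def, map_mul, map_add, map_neg]
  linear_combination algebraMap k l (b.repr x 1) * hτ

theorem repr_tau_mul_zero (hb0 : b 0 = 1) (hb1 : b 1 = τ)
    (hτ : τ ^ 2 = algebraMap k l c₁ * τ - algebraMap k l c₂) (x : l) :
    b.repr (τ * x) 0 = -(c₂ * b.repr x 1) := by
  rw [tau_mul_eq_basis_combination hb0 hb1 hτ]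
  simp

theorem repr_tau_mul_one (hb0 : b 0 = 1) (hb1 : b 1 = τ)
    (hτ : τ ^ 2 = algebraMap k l c₁ * τ - algebraMap k l c₂) (x : l) :
    b.repr (τ * x) 1 = b.repr x 0 + c₁ * b.repr x 1 := by
  rw [tau_mul_eq_basis_combination hb0 hb1 hτ]
  simp

end QuadraticAlgebra

theorem double_reflection_commutes_with_tauOp_general
    (k : Type*) [CommRing k]
    (l : Type*) [CommRing l] [Algebra k l]
    (c₁ c₂ : k) (τ : l) (b : Module.Basis (Fin 2) k l) (hb0 : b 0 = 1) (hb1 : b 1 = τ)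
    (hτ : τ ^ 2 = algebraMap k l c₁ * τ - algebraMap k l c₂)
    -- `c₂ = −1`
    (hc₂' : c₂ = -1)
    -- `α` is `τ`-rational : `α ≠ 0` and `(α_l · α_l) = c·1 ∈ k·1`
    (n : ℕ) (α : Fin n → l)
    (c : k) (hrat : dotU α α = algebraMap k l c)
    (cinv : k) :
    ∀ u : Fin n → l,
      τ • reflU b cinv (τ • α) (reflU b cinv α u) =
        reflU b cinv (τ • α) (reflU b cinv α (τ • u)) := by
  subst hc₂'
  have repr0 := repr_tau_mul_zero hb0 hb1 hτ
  have repr1 := repr_tau_mul_one hb0 hb1 hτ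
  have horth : tauForm b α (τ • α) = 0 := by
    rw [tauForm_smul_right, repr0, hrat, repr_algebraMap_one hb0, mul_zero, neg_zero]
  intro u
  set r₀ := b.repr (dotU u α) 0
  set r₁ := b.repr (dotU u α) 1
  have hu_τα : tauForm b u (τ • α) = r₁ := by rw [tauForm_smul_right, repr0]; ring
  have hτu_α : tauForm b (τ • u) α = r₁ := by rw [tauForm_smul_left, repr0]; ring
  have hτu_τα : tauForm b (τ • u) (τ • α) = r₀ + c₁ * r₁ := by
    rw [tauForm_smul_left, dotU_smul_right, repr0, repr1]; ring
  have hu_α : tauForm b u α = r₀ := rfl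
  rw [reflU_reflU_of_tauForm_eq_zero b cinv horth, reflU_reflU_of_tauForm_eq_zero b cinv horth,
    hu_α, hu_τα, hτu_α, hτu_τα]
  funext i
  simp only [Pi.smul_apply, Pi.sub_apply, smul_eq_mul]
  simp only [Algebra.smul_def, map_mul, map_add, map_neg, map_one, map_ofNat] at hτ ⊢
  linear_combination -(2 * algebraMap k l cinv * algebraMap k l r₁ * α i) * hτ

/-- Assume `c₂ = −1`.  Let `α ∈ U` be `τ`-rational with `c := B_τ(α, α)`
invertible in `k`.  Then the composite `k`-linear operator `r_{𝒯α} ∘ r_α : U → U` commutes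
with the `τ`-operator `𝒯` (which is `u ↦ τ • u`):
`𝒯 ∘ (r_{𝒯α} ∘ r_α) = (r_{𝒯α} ∘ r_α) ∘ 𝒯`. -/
theorem double_reflection_commutes_with_tauOp
    (k : Type*) [CommRing k] [IsDomain k] (ιk : k →+* ℝ) (hιk : Function.Injective ιk)
    (l : Type*) [CommRing l] [Algebra k l]
    (c₁ c₂ : k) (τ σ : l) (b : Module.Basis (Fin 2) k l) (hb0 : b 0 = 1) (hb1 : b 1 = τ)
    (hτ : τ ^ 2 = algebraMap k l c₁ * τ - algebraMap k l c₂)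
    (hσ : σ = algebraMap k l c₁ - τ)
    (hc₂ : IsUnit c₂) (hD : IsUnit (c₁ ^ 2 - 4 * c₂))
    -- `c₂ = −1`
    (hc₂' : c₂ = -1)
    -- `α` is `τ`-rational : `α ≠ 0` and `(α_l · α_l) = c·1 ∈ k·1`
    (n : ℕ) (α : Fin n → l) (hα : α ≠ 0)
    (c : k) (hrat : dotU α α = algebraMap k l c)
    -- `c = B_τ(α, α)` is invertible in `k`, with inverse `cinv`
    (hc : c = tauForm b α α) (cinv : k) (hcinv : c * cinv = 1) :
    ∀ u : Fin n → l,
      τ • reflU b cinv (τ • α) (reflU b cinv α u) =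
        reflU b cinv (τ • α) (reflU b cinv α (τ • u)) :=
  double_reflection_commutes_with_tauOp_general k l c₁ c₂ τ b hb0 hb1 hτ hc₂' n α c hrat cinv
end

section
/- Assume c₂ = −1. Let Δ_rat be a set of τ-rational elements of U, each with B_τ(α, α) invertible in k, and let Δ^𝒯 be a set of elements β ∈ U with 𝒯β = β and B_τ(β, β) invertible in k. Then every element of the subgroup of GL_k(U) generated by the operators { r_{𝒯α} ∘ r_α : α ∈ Δ_rat } ∪ { r_β : β ∈ Δ^𝒯 } commutes with the τ-operator 𝒯. -/
open scoped BigOperators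

/-!
Multiplication by `τ` is self-adjoint for `B_τ`, because `(τu)·v = τ(u·v) = u·(τv)` already
holds for the dot product. Hence a reflection `r_β` with `𝒯β = β` commutes with `𝒯`. For a
`τ`-rational `α`, `α·α ∈ k` gives `B_τ(α, 𝒯α) = 0`, so
`r_{𝒯α} r_α u = u - s B_τ(u, α) α - s B_τ(u, 𝒯α) 𝒯α`; as `c₂ = -1` means `𝒯²α = c₁ 𝒯α + α`,
self-adjointness shows that this map commutes with `𝒯` as well. The automorphisms commuting with
`𝒯` form a subgroup, which therefore contains the whole generated group.
-/

open Module

section CommutingAutomorphisms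

variable {k M : Type*} [CommRing k] [AddCommGroup M] [Module k M]

def commutingAutomorphisms (T : Module.End k M) : Subgroup (M ≃ₗ[k] M) where
  carrier := {g | Commute (g : Module.End k M) T}
  one_mem' := Commute.one_left T
  mul_mem' {g h} hg hh := by
    simpa only [Set.mem_ofPred_eq, LinearEquiv.coe_toLinearMap_mul] using hg.mul_left hh
  inv_mem' {g} hg := by
    ext u
    have h := LinearMap.congr_fun hg (g.symm u)
    simp only [Module.End.mul_apply, LinearEquiv.coe_coe, LinearEquiv.apply_symm_apply] at h
    exact g.symm_apply_eq.mpr h.symm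

theorem mem_commutingAutomorphisms_of_coe_eq {T f : Module.End k M} {g : M ≃ₗ[k] M}
    (hgf : ⇑g = ⇑f) (hf : Commute f T) : g ∈ commutingAutomorphisms T := by
  change Commute (g : Module.End k M) T
  rwa [show (g : Module.End k M) = f from LinearMap.ext (congrFun hgf)]

variable (B : LinearMap.BilinForm k M) {T : Module.End k M}

theorem commute_preReflection_of_apply_eq_smul (hT : B.IsAdjointPair B T T) {a : M} {μ : k}
    (ha : T a = μ • a) (s : k) : Commute (preReflection a (s • B.flip a)) T := by
  ext u
  simp only [Module.End.mul_apply, preReflection_apply, LinearMap.smul_apply,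
    LinearMap.BilinForm.flip_apply, map_sub, map_smul, ha, hT u a, smul_eq_mul]
  module

theorem preReflection_mul_preReflection_apply_of_eq_zero {a a' : M} (h : B a a' = 0) (s s' : k)
    (u : M) : (preReflection a' (s' • B.flip a') * preReflection a (s • B.flip a)) u =
      u - (s * B u a) • a - (s' * B u a') • a' := by
  simp [preReflection_apply, h]

theorem commute_preReflection_mul_preReflection (hT : B.IsAdjointPair B T T) {a : M} {c : k}
    (hTa : T (T a) = c • T a + a) (horth : B a (T a) = 0) (s : k) :
    Commute (preReflection (T a) (s • B.flip (T a)) * preReflection a (s • B.flip a)) T := by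
  ext u
  rw [Module.End.mul_apply, preReflection_mul_preReflection_apply_of_eq_zero B horth,
    Module.End.mul_apply, preReflection_mul_preReflection_apply_of_eq_zero B horth]
  simp only [map_sub, map_smul, hT u, hTa, map_add, smul_eq_mul]
  module

end CommutingAutomorphisms

section TauForm

variable {k l : Type*} [CommRing k] [CommRing l] [Algebra k l] {n : ℕ}

noncomputable def tauBilin (b : Basis (Fin 2) k l) : LinearMap.BilinForm k (Fin n → l) :=
  (dotProductBilin k k).compr₂ (b.coord 0)

theorem tauBilin_apply (b : Basis (Fin 2) k l) (u v : Fin n → l) :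
    tauBilin b u v = tauForm b u v :=
  rfl

theorem reflU_eq_preReflection (b : Basis (Fin 2) k l) (c : k) (a u : Fin n → l) :
    reflU b c a u = preReflection a ((2 * c) • (tauBilin b).flip a) u := by
  simp [reflU, preReflection_apply, tauBilin_apply]

theorem isAdjointPair_tauBilin_lsmul (b : Basis (Fin 2) k l) (z : l) :
    (tauBilin b).IsAdjointPair (tauBilin b) (Algebra.lsmul k k (Fin n → l) z)
      (Algebra.lsmul k k (Fin n → l) z) := by
  intro u v
  simp [tauBilin, smul_dotProduct, dotProduct_smul]

theorem tauBilin_smul_self_eq_zero {b : Basis (Fin 2) k l} {τ : l} (hb1 : b 1 = τ)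
    {α : Fin n → l} {c : k} (hα : dotU α α = algebraMap k l c) : tauBilin b α (τ • α) = 0 := by
  have : dotU α (τ • α) = c • b 1 := by
    rw [hb1, Algebra.smul_def c τ, ← hα, mul_comm]
    exact dotProduct_smul τ α α
  simp [tauBilin_apply, tauForm, this]

end TauForm

theorem generated_subgroup_commutes_with_tauOp_general
    (k : Type*) [CommRing k]
    (l : Type*) [CommRing l] [Algebra k l]
    (c₁ c₂ : k) (τ : l) (b : Module.Basis (Fin 2) k l) (hb1 : b 1 = τ)
    (hτ : τ ^ 2 = algebraMap k l c₁ * τ - algebraMap k l c₂)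
    (hc₂' : c₂ = -1)
    (n : ℕ)
    (Δrat ΔT : Set (Fin n → l)) (cinv : (Fin n → l) → k)
    -- every `α ∈ Δ_rat` is `τ`-rational with `B_τ(α, α)` invertible (inverse `cinv α`)
    (hrat : ∀ α ∈ Δrat, α ≠ 0 ∧ ∃ c : k, dotU α α = algebraMap k l c)
    -- every `β ∈ Δ^𝒯` is `𝒯`-invariant with `B_τ(β, β)` invertible (inverse `cinv β`)
    (hT : ∀ β ∈ ΔT, τ • β = β) :
    ∀ g ∈ Subgroup.closure
        ({g : (Fin n → l) ≃ₗ[k] (Fin n → l) |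
            (∃ α ∈ Δrat, ∀ u, g u = reflU b (cinv α) (τ • α) (reflU b (cinv α) α u)) ∨
            (∃ β ∈ ΔT, ∀ u, g u = reflU b (cinv β) β u)}),
      ∀ u : Fin n → l, g (τ • u) = τ • g u := by
  set T : Module.End k (Fin n → l) := Algebra.lsmul k k (Fin n → l) τ
  have hTT (α : Fin n → l) : T (T α) = c₁ • T α + α := by
    change τ • τ • α = c₁ • τ • α + α
    rw [smul_smul, ← sq, hτ, hc₂', map_neg, map_one, sub_neg_eq_add, add_smul, one_smul, mul_smul,
      algebraMap_smul]
  intro g hg u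
  refine LinearMap.congr_fun ((Subgroup.closure_le (commutingAutomorphisms T)).mpr ?_ hg).eq u
  rintro g (⟨α, hα, hgα⟩ | ⟨β, hβ, hgβ⟩)
  · obtain ⟨c, hc⟩ := (hrat α hα).2
    refine mem_commutingAutomorphisms_of_coe_eq (funext fun u => ?_)
      (commute_preReflection_mul_preReflection _ (isAdjointPair_tauBilin_lsmul b τ) (hTT α)
        (tauBilin_smul_self_eq_zero hb1 hc) (2 * cinv α))
    rw [hgα, reflU_eq_preReflection, reflU_eq_preReflection]
    rfl
  · refine mem_commutingAutomorphisms_of_coe_eq (funext fun u => ?_)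
      (commute_preReflection_of_apply_eq_smul _ (isAdjointPair_tauBilin_lsmul b τ)
        ((hT β hβ).trans (one_smul k β).symm) (2 * cinv β))
    rw [hgβ, reflU_eq_preReflection]

/-- Assume `c₂ = −1`.  Let `Δ_rat` be a set of `τ`-rational elements of
`U`, each with `B_τ(α, α)` invertible in `k`, and let `Δ^𝒯` be a set of elements `β ∈ U`
with `𝒯β = β` and `B_τ(β, β)` invertible in `k`.  Then every element of the subgroup of
`GL_k(U)` generated by the operators `{ r_{𝒯α} ∘ r_α : α ∈ Δ_rat } ∪ { r_β : β ∈ Δ^𝒯 }`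
commutes with the `τ`-operator `𝒯 : u ↦ τ • u`. -/
theorem generated_subgroup_commutes_with_tauOp
    (k : Type*) [CommRing k] [IsDomain k] (ιk : k →+* ℝ) (hιk : Function.Injective ιk)
    (l : Type*) [CommRing l] [Algebra k l]
    (c₁ c₂ : k) (τ σ : l) (b : Module.Basis (Fin 2) k l) (hb0 : b 0 = 1) (hb1 : b 1 = τ)
    (hτ : τ ^ 2 = algebraMap k l c₁ * τ - algebraMap k l c₂)
    (hσ : σ = algebraMap k l c₁ - τ)
    (hc₂ : IsUnit c₂) (hD : IsUnit (c₁ ^ 2 - 4 * c₂))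
    (hc₂' : c₂ = -1)
    (n : ℕ)
    (Δrat ΔT : Set (Fin n → l)) (cinv : (Fin n → l) → k)
    -- every `α ∈ Δ_rat` is `τ`-rational with `B_τ(α, α)` invertible (inverse `cinv α`)
    (hrat : ∀ α ∈ Δrat, α ≠ 0 ∧ ∃ c : k, dotU α α = algebraMap k l c)
    (hcinvrat : ∀ α ∈ Δrat, tauForm b α α * cinv α = 1)
    -- every `β ∈ Δ^𝒯` is `𝒯`-invariant with `B_τ(β, β)` invertible (inverse `cinv β`)
    (hT : ∀ β ∈ ΔT, τ • β = β)
    (hcinvT : ∀ β ∈ ΔT, tauForm b β β * cinv β = 1) :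
    ∀ g ∈ Subgroup.closure
        ({g : (Fin n → l) ≃ₗ[k] (Fin n → l) |
            (∃ α ∈ Δrat, ∀ u, g u = reflU b (cinv α) (τ • α) (reflU b (cinv α) α u)) ∨
            (∃ β ∈ ΔT, ∀ u, g u = reflU b (cinv β) β u)}),
      ∀ u : Fin n → l, g (τ • u) = τ • g u :=
  generated_subgroup_commutes_with_tauOp_general k l c₁ c₂ τ b hb1 hτ hc₂' n Δrat ΔT cinv hrat hT
end

section
/- Assume c₂ = −1. Let θ ∈ U and let α ∈ U be τ-rational. Then B_τ(π_τ(θ), π_τ(α)) = (1/(τ−σ)²)·( (1 + σ²)·B_τ(θ, α) + (τ − σ)·B_τ(θ, 𝒯α) ) in l. In particular, if l is an integral domain contained in ℝ with τ > σ, and B_τ(θ, α) ≥ 0 and B_τ(θ, 𝒯α) ≥ 0, then B_τ(π_τ(θ), π_τ(α)) ≥ 0. -/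
open scoped BigOperators

section Common

variable {k : Type*} [CommRing k] {l : Type*} [CommRing l] [Algebra k l]

/-- the coordinate embedding `U → U_l = (l²)ⁿ`. -/
noncomputable def emb (b : Module.Basis (Fin 2) k l) {n : ℕ} (u : Fin n → l) : Fin n → l × l :=
  fun i => (algebraMap k l (b.repr (u i) 0), algebraMap k l (b.repr (u i) 1))

end Common

section Ul
variable {l : Type*} [CommRing l]

/-- the `τ`-operator `𝒯_l` on `U_l = (l²)ⁿ` in coordinates. -/
def tauOp (c₁ c₂ : l) (n : ℕ) : (Fin n → l × l) →ₗ[l] (Fin n → l × l) where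
  toFun v := fun i => (-c₂ * (v i).2, (v i).1 + c₁ * (v i).2)
  map_add' x y := by
    funext i
    refine Prod.ext ?_ ?_ <;> simp <;> ring
  map_smul' c x := by
    funext i
    refine Prod.ext ?_ ?_ <;> simp <;> ring

/-- the `l`-bilinear extension of the `τ`-form to `U_l`. -/
def tauForml (c₂ : l) {n : ℕ} (v w : Fin n → l × l) : l :=
  ∑ i, ((v i).1 * (w i).1 - c₂ * (v i).2 * (w i).2)

/-- the projection `π_τ = (1/(τ−σ))(𝒯_l − σ·id)` onto the `τ`-eigenspace. -/
def piTau (c₁ c₂ σ invτσ : l) {n : ℕ} (v : Fin n → l × l) : Fin n → l × l :=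
  invτσ • (tauOp c₁ c₂ n v - σ • v)

end Ul

/-!
On `U`, `π_τ(u) = (1/(τ−σ))·(−σu, u)` because `στ = c₂`, so
`B_τ(π_τ θ, π_τ α) = (σ² − c₂)/(τ−σ)² · (θ·α)` for all `θ, α`. Writing `θ·α = x + yτ`, we have
`B_τ(θ, α) = x` and `B_τ(θ, 𝒯α) = −c₂y`; for `c₂ = −1` the relation `στ = −1` turns
`(σ² + 1)·yτ` into `(τ − σ)·y`, which gives the identity, whose right-hand side is
a square times a nonnegative combination once `τ > σ`.
-/

section Basis

variable {k : Type*} [CommRing k] {l : Type*} [CommRing l] [Algebra k l]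
  {b : Module.Basis (Fin 2) k l} {τ : l}

theorem algebraMap_repr_add_mul (hb0 : b 0 = 1) (hb1 : b 1 = τ) (u : l) :
    algebraMap k l (b.repr u 0) + algebraMap k l (b.repr u 1) * τ = u := by
  conv_rhs => rw [← b.sum_repr u]
  simp [Fin.sum_univ_two, hb0, hb1, Algebra.smul_def]

theorem repr_add_mul_zero (hb0 : b 0 = 1) (hb1 : b 1 = τ) (x y : k) :
    b.repr (algebraMap k l x + algebraMap k l y * τ) 0 = x := by
  rw [← hb1, ← mul_one (algebraMap k l x), ← hb0, ← Algebra.smul_def, ← Algebra.smul_def]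
  simp

variable {c₁ c₂ : k} {σ : l}

theorem sigma_mul_tau (hτ : τ ^ 2 = algebraMap k l c₁ * τ - algebraMap k l c₂)
    (hσ : σ = algebraMap k l c₁ - τ) : σ * τ = algebraMap k l c₂ := by
  linear_combination (-1 : l) * hτ + τ * hσ

-- `τ·(x + yτ) = −c₂y + (x + c₁y)τ`
theorem tauForm_tau_smul (hb0 : b 0 = 1) (hb1 : b 1 = τ)
    (hτ : τ ^ 2 = algebraMap k l c₁ * τ - algebraMap k l c₂) {n : ℕ} (θ α : Fin n → l) :
    tauForm b θ (τ • α) = -c₂ * b.repr (dotU θ α) 1 := by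
  have hdot : dotU θ (τ • α) = τ * dotU θ α := by
    simp only [dotU, Finset.mul_sum, Pi.smul_apply, smul_eq_mul, mul_left_comm]
  set x := b.repr (dotU θ α) 0
  set y := b.repr (dotU θ α) 1
  have hcoords : dotU θ (τ • α) =
      algebraMap k l (-c₂ * y) + algebraMap k l (x + c₁ * y) * τ := by
    rw [hdot, ← algebraMap_repr_add_mul hb0 hb1 (dotU θ α)]
    simp only [map_add, map_mul, map_neg]
    linear_combination algebraMap k l y * hτ
  rw [tauForm, hcoords, repr_add_mul_zero hb0 hb1]

theorem piTau_emb (hb0 : b 0 = 1) (hb1 : b 1 = τ)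
    (hτ : τ ^ 2 = algebraMap k l c₁ * τ - algebraMap k l c₂) (hσ : σ = algebraMap k l c₁ - τ)
    (invτσ : l) {n : ℕ} (u : Fin n → l) :
    piTau (algebraMap k l c₁) (algebraMap k l c₂) σ invτσ (emb b u) =
      fun i => (invτσ * (-σ * u i), invτσ * u i) := by
  funext i
  have hu := algebraMap_repr_add_mul hb0 hb1 (u i)
  have hστ := sigma_mul_tau hτ hσ
  refine Prod.ext ?_ ?_
  · change invτσ * (-algebraMap k l c₂ * algebraMap k l (b.repr (u i) 1) -
      σ * algebraMap k l (b.repr (u i) 0)) = _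
    linear_combination (-(invτσ * σ)) * hu + invτσ * algebraMap k l (b.repr (u i) 1) * hστ
  · change invτσ * (algebraMap k l (b.repr (u i) 0) +
      algebraMap k l c₁ * algebraMap k l (b.repr (u i) 1) -
      σ * algebraMap k l (b.repr (u i) 1)) = _
    linear_combination invτσ * hu - invτσ * algebraMap k l (b.repr (u i) 1) * hσ

theorem tauForml_piTau_emb (hb0 : b 0 = 1) (hb1 : b 1 = τ)
    (hτ : τ ^ 2 = algebraMap k l c₁ * τ - algebraMap k l c₂) (hσ : σ = algebraMap k l c₁ - τ)
    (invτσ : l) {n : ℕ} (θ α : Fin n → l) :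
    tauForml (algebraMap k l c₂)
        (piTau (algebraMap k l c₁) (algebraMap k l c₂) σ invτσ (emb b θ))
        (piTau (algebraMap k l c₁) (algebraMap k l c₂) σ invτσ (emb b α)) =
      invτσ ^ 2 * (σ ^ 2 - algebraMap k l c₂) * dotU θ α := by
  rw [piTau_emb hb0 hb1 hτ hσ, piTau_emb hb0 hb1 hτ hσ, tauForml, dotU, Finset.mul_sum]
  exact Finset.sum_congr rfl fun i _ => by ring

end Basis

theorem tauForm_of_projections_general
    (k : Type*) [CommRing k] (ιk : k →+* ℝ)
    (l : Type*) [CommRing l] [Algebra k l]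
    (ιl : l →+* ℝ)
    (c₁ c₂ : k) (τ σ : l) (b : Module.Basis (Fin 2) k l) (hb0 : b 0 = 1) (hb1 : b 1 = τ)
    (hτ : τ ^ 2 = algebraMap k l c₁ * τ - algebraMap k l c₂)
    (hσ : σ = algebraMap k l c₁ - τ)
    (hc₂' : c₂ = -1)
    (invτσ : l)
    (n : ℕ) (θ α : Fin n → l) :
    -- the identity in `l`
    (tauForml (algebraMap k l c₂)
        (piTau (algebraMap k l c₁) (algebraMap k l c₂) σ invτσ (emb b θ))
        (piTau (algebraMap k l c₁) (algebraMap k l c₂) σ invτσ (emb b α)) =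
      invτσ ^ 2 * ((1 + σ ^ 2) * algebraMap k l (tauForm b θ α) +
        (τ - σ) * algebraMap k l (tauForm b θ (τ • α)))) ∧
    -- the consequence for `l ⊆ ℝ` with `τ > σ`
    (ιl σ < ιl τ →
      0 ≤ ιk (tauForm b θ α) →
      0 ≤ ιk (tauForm b θ (τ • α)) →
      (∀ x : k, ιl (algebraMap k l x) = ιk x) →
      0 ≤ ιl (tauForml (algebraMap k l c₂)
          (piTau (algebraMap k l c₁) (algebraMap k l c₂) σ invτσ (emb b θ))
          (piTau (algebraMap k l c₁) (algebraMap k l c₂) σ invτσ (emb b α)))) := by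
  have hc₂l : algebraMap k l c₂ = -1 := by rw [hc₂', map_neg, map_one]
  have hστ : σ * τ = -1 := hc₂l ▸ sigma_mul_tau hτ hσ
  have hdot := algebraMap_repr_add_mul hb0 hb1 (dotU θ α)
  have hmain : tauForml (algebraMap k l c₂)
      (piTau (algebraMap k l c₁) (algebraMap k l c₂) σ invτσ (emb b θ))
      (piTau (algebraMap k l c₁) (algebraMap k l c₂) σ invτσ (emb b α)) =
      invτσ ^ 2 * ((1 + σ ^ 2) * algebraMap k l (tauForm b θ α) +
        (τ - σ) * algebraMap k l (tauForm b θ (τ • α))) := by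
    rw [tauForml_piTau_emb hb0 hb1 hτ hσ, tauForm_tau_smul hb0 hb1 hτ, tauForm]
    simp only [map_mul, map_neg, hc₂l]
    linear_combination -(invτσ ^ 2 * (σ ^ 2 + 1)) * hdot +
      invτσ ^ 2 * algebraMap k l (b.repr (dotU θ α) 1) * σ * hστ
  refine ⟨hmain, fun hlt hθα hθτα hcompat => ?_⟩
  rw [hmain]
  simp only [map_mul, map_add, map_sub, map_one, map_pow, hcompat]
  have hτσ := sub_pos.2 hlt
  positivity

/-- Assume `c₂ = −1`.  Let `θ ∈ U` and let `α ∈ U` be `τ`-rational.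
Then `B_τ(π_τ(θ), π_τ(α)) = (1/(τ−σ)²)·((1 + σ²)·B_τ(θ, α) + (τ − σ)·B_τ(θ, 𝒯α))` in
`l`.  In particular, if `l` is an integral domain contained in `ℝ` with `τ > σ`, and
`B_τ(θ, α) ≥ 0` and `B_τ(θ, 𝒯α) ≥ 0`, then `B_τ(π_τ(θ), π_τ(α)) ≥ 0`. -/
theorem tauForm_of_projections
    (k : Type*) [CommRing k] [IsDomain k] (ιk : k →+* ℝ) (hιk : Function.Injective ιk)
    (l : Type*) [CommRing l] [Algebra k l]
    (ιl : l →+* ℝ) (hιl : Function.Injective ιl)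
    (c₁ c₂ : k) (τ σ : l) (b : Module.Basis (Fin 2) k l) (hb0 : b 0 = 1) (hb1 : b 1 = τ)
    (hτ : τ ^ 2 = algebraMap k l c₁ * τ - algebraMap k l c₂)
    (hσ : σ = algebraMap k l c₁ - τ)
    (hc₂ : IsUnit c₂) (hD : IsUnit (c₁ ^ 2 - 4 * c₂))
    (hc₂' : c₂ = -1)
    (invτσ : l) (hinv : invτσ * (τ - σ) = 1)
    (n : ℕ) (θ α : Fin n → l)
    -- `α` is `τ`-rational
    (hα : α ≠ 0) (c : k) (hrat : dotU α α = algebraMap k l c) :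
    -- the identity in `l`
    (tauForml (algebraMap k l c₂)
        (piTau (algebraMap k l c₁) (algebraMap k l c₂) σ invτσ (emb b θ))
        (piTau (algebraMap k l c₁) (algebraMap k l c₂) σ invτσ (emb b α)) =
      invτσ ^ 2 * ((1 + σ ^ 2) * algebraMap k l (tauForm b θ α) +
        (τ - σ) * algebraMap k l (tauForm b θ (τ • α)))) ∧
    -- the consequence for `l ⊆ ℝ` with `τ > σ`
    (ιl σ < ιl τ →
      0 ≤ ιk (tauForm b θ α) →
      0 ≤ ιk (tauForm b θ (τ • α)) →
      (∀ x : k, ιl (algebraMap k l x) = ιk x) →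
      0 ≤ ιl (tauForml (algebraMap k l c₂)
          (piTau (algebraMap k l c₁) (algebraMap k l c₂) σ invτσ (emb b θ))
          (piTau (algebraMap k l c₁) (algebraMap k l c₂) σ invτσ (emb b α)))) :=
  tauForm_of_projections_general k ιk l ιl c₁ c₂ τ σ b hb0 hb1 hτ hσ hc₂' invτσ n θ α
end
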